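/- arXiv:2109.04343 — 5 statements merged into one kernel-verified Lean document; each statement's English description precedes it below -/
import Mathlib

section
/- For p ∈ (0,1) and integer T ≥ 2, the quantity r(T) = (1-(1-p)^T)/(p - p(1-p)^{T-1}) is strictly decreasing in T. -/
theorem r_strict_decreasing (p : ℝ) (hp : 0 < p) (hp1 : p < 1) :
    ∀ T : ℕ, 2 ≤ T →
      (1 - (1 - p) ^ (T + 1)) / (p - p * (1 - p) ^ T)
        < (1 - (1 - p) ^ T) / (p - p * (1 - p) ^ (T - 1)) := by
  intro T hT
  obtain ⟨n, rfl⟩ : ∃ n, T = n + 2 := ⟨T - 2, by omega⟩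
  set q : ℝ := 1 - p with hq
  have hq0 : 0 < q := by simp [hq]; linarith
  have hq1 : q < 1 := by simp [hq]; linarith
  have ha : 0 < q ^ (n + 1) := pow_pos hq0 _
  have ha1 : q ^ (n + 1) < 1 := pow_lt_one₀ hq0.le hq1 (by omega)
  have hd1 : 0 < p - p * q ^ (n + 2) := by
    have : q ^ (n + 2) < 1 := pow_lt_one₀ hq0.le hq1 (by omega)
    nlinarith
  have hd2 : 0 < p - p * q ^ (n + 1) := by nlinarith
  rw [show n + 2 - 1 = n + 1 from rfl, div_lt_div_iff₀ hd1 hd2]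
  have e1 : q ^ (n + 2) = q ^ (n + 1) * q := by ring
  have e2 : q ^ (n + 2 + 1) = q ^ (n + 1) * q ^ 2 := by ring
  rw [e1, e2]
  have hsq : 0 < (1 - q) ^ 2 := by
    have : (1 : ℝ) - q = p := by simp [hq]
    rw [this]; positivity
  nlinarith [mul_pos ha hsq, mul_pos hp (mul_pos ha hsq)]
end

section
/- For p ∈ (0, 1/2) the function h(t) = (1-(1-p)^t)/(2p - p(1-p)^{t-1}) is strictly increasing in the integer variable t ≥ 1, with h(1) = 1. -/
/-!
With `q = 1 - p` and `a = q ^ (t - 1)` we have `h t = (1 - a q) / (p (2 - a))` and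
`h (t + 1) = (1 - a q²) / (p (2 - a q))`. After cross-multiplying, the difference of the two
sides is `p · a (2q - 1)(1 - q)`, positive exactly because `1/2 < q < 1`.
-/

theorem div_sub_lt_div_sub_mul {a q c : ℝ} (hq : 1 / 2 < q) (hq1 : q < 1) (ha : 0 < a)
    (ha2 : a < 2) (hc : 0 < c) :
    (1 - a * q) / (c * 2 - c * a) < (1 - a * q * q) / (c * 2 - c * (a * q)) := by
  have haq : a * q < a := mul_lt_of_lt_one_right ha hq1
  have hden : 0 < c * 2 - c * a := by nlinarith
  have hden' : 0 < c * 2 - c * (a * q) := by nlinarith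
  rw [div_lt_div_iff₀ hden hden']
  have hgap : 0 < c * (a * ((2 * q - 1) * (1 - q))) := by
    have : 0 < (2 * q - 1) * (1 - q) := mul_pos (by linarith) (by linarith)
    positivity
  have key : (1 - a * q * q) * (c * 2 - c * a) - (1 - a * q) * (c * 2 - c * (a * q))
      = c * (a * ((2 * q - 1) * (1 - q))) := by ring
  linarith

theorem h_strict_increasing (p : ℝ) (hp : 0 < p) (hp2 : p < 1 / 2) :
    (∀ t : ℕ, 1 ≤ t →
        (1 - (1 - p) ^ t) / (2 * p - p * (1 - p) ^ (t - 1))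
          < (1 - (1 - p) ^ (t + 1)) / (2 * p - p * (1 - p) ^ t)) ∧
      (1 - (1 - p) ^ 1) / (2 * p - p * (1 - p) ^ (1 - 1)) = 1 := by
  refine ⟨fun t ht => ?_, ?_⟩
  · obtain ⟨s, rfl⟩ := Nat.exists_eq_add_of_le' ht
    have hpow : (1 - p) ^ s ≤ 1 := pow_le_one₀ (by linarith) (by linarith)
    simpa only [Nat.add_sub_cancel, pow_succ, mul_comm 2 p] using
      div_sub_lt_div_sub_mul (a := (1 - p) ^ s) (by linarith) (by linarith)
        (pow_pos (by linarith) s) (by linarith) hp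
  · rw [pow_one, Nat.sub_self, pow_zero, mul_one, two_mul, add_sub_cancel_right, sub_sub_cancel]
    exact div_self hp.ne'
end

section
/- For p ∈ (0,1) and integers T ≥ 2 and 1 ≤ t ≤ T, the threshold with truthful history h(t) = (1-(1-p)^t)/(2p - p(1-p)^{t-1}) is at most the no-history threshold r(T) = (1-(1-p)^T)/(p - p(1-p)^{T-1}). -/
theorem h_le_r (p : ℝ) (hp : 0 < p) (hp1 : p < 1) (T t : ℕ) (hT : 2 ≤ T)
    (ht : 1 ≤ t) (htT : t ≤ T) :
    (1 - (1 - p) ^ t) / (2 * p - p * (1 - p) ^ (t - 1))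
      ≤ (1 - (1 - p) ^ T) / (p - p * (1 - p) ^ (T - 1)) := by
  have hq0 : (0:ℝ) < 1 - p := by linarith
  have h1t : (1 - p) ^ (t - 1) ≤ 1 := pow_le_one₀ hq0.le (by linarith)
  have h1T : (1 - p) ^ (T - 1) < 1 := pow_lt_one₀ hq0.le (by linarith) (by omega)
  have hd1 : 0 < 2 * p - p * (1 - p) ^ (t - 1) := by nlinarith
  have hd2 : 0 < p - p * (1 - p) ^ (T - 1) := by nlinarith
  have key1 : (1 - (1 - p) ^ t) / (2 * p - p * (1 - p) ^ (t - 1)) ≤ 1 / p := by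
    rw [div_le_div_iff₀ hd1 hp]
    have e : (1 - p) ^ t = (1 - p) ^ (t - 1) * (1 - p) := by
      rw [← pow_succ]; congr 1; omega
    rw [e]
    nlinarith [mul_le_mul_of_nonneg_right h1t (mul_nonneg hp.le hp.le), mul_pos hp hq0]
  have key2 : 1 / p ≤ (1 - (1 - p) ^ T) / (p - p * (1 - p) ^ (T - 1)) := by
    rw [div_le_div_iff₀ hp hd2]
    have e : (1 - p) ^ T = (1 - p) ^ (T - 1) * (1 - p) := by
      rw [← pow_succ]; congr 1; omega
    rw [e]
    nlinarith [pow_pos hq0 (T - 1), mul_nonneg (mul_nonneg hp.le (pow_pos hq0 (T-1)).le) hp.le]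
  linarith
end

section
/- For p ∈ (0, 1/2), r real, and integer t ≥ 2, with A(t) = (1-r)·∑_{i=1}^{t-1}(1-p)^i + (1-p-p·r)·(1-p)^{t-1} + (1-2p)·r·∑_{i=1}^{t-1}(1-p)^{i-1}, we have A(t) + 1 - r ≥ 0 if and only if r ≤ (1-(1-p)^{t+1})/(2p - p(1-p)^t). -/
theorem A_nonneg_iff (p r : ℝ) (hp : 0 < p) (hp2 : p < 1 / 2) (t : ℕ) (ht : 2 ≤ t) :
    ((1 - r) * (∑ i ∈ Finset.Icc 1 (t - 1), (1 - p) ^ i)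
        + (1 - p - p * r) * (1 - p) ^ (t - 1)
        + (1 - 2 * p) * r * (∑ i ∈ Finset.Icc 1 (t - 1), (1 - p) ^ (i - 1)))
        + 1 - r ≥ 0
      ↔ r ≤ (1 - (1 - p) ^ (t + 1)) / (2 * p - p * (1 - p) ^ t) := by
  have hq0 : (0:ℝ) ≤ 1 - p := by linarith
  have hq1 : (1-p:ℝ) ≠ 1 := by intro h; nlinarith
  have hqle : (1-p:ℝ) ^ t ≤ 1 := pow_le_one₀ hq0 (by linarith)
  have hden : 0 < 2 * p - p * (1 - p) ^ t := by nlinarith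
  rw [le_div_iff₀ hden]
  have hpne : p ≠ 0 := ne_of_gt hp
  have ht1 : t - 1 + 1 = t := by omega
  have hIcc : Finset.Icc 1 (t-1) = Finset.Ico 1 t := by
    rw [← Finset.Ico_add_one_right_eq_Icc]
    congr 1
  have h1 : ∑ i ∈ Finset.Icc 1 (t - 1), (1 - p) ^ i
      = (1 - p) * ∑ i ∈ Finset.range (t - 1), (1 - p) ^ i := by
    rw [hIcc, Finset.sum_Ico_eq_sum_range, Finset.mul_sum]
    refine Finset.sum_congr rfl fun i _ => ?_
    rw [pow_add, pow_one]
  have h2 : ∑ i ∈ Finset.Icc 1 (t - 1), (1 - p) ^ (i - 1)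
      = ∑ i ∈ Finset.range (t - 1), (1 - p) ^ i := by
    rw [hIcc, Finset.sum_Ico_eq_sum_range]
    refine Finset.sum_congr rfl fun i _ => ?_
    congr 1
    omega
  rw [h1, h2, geom_sum_eq hq1]
  have e1 : (1 - p) ^ t = (1 - p) ^ (t - 1) * (1 - p) := by
    rw [← pow_succ, ht1]
  have e2 : (1 - p) ^ (t + 1) = (1 - p) ^ (t - 1) * (1 - p) ^ 2 := by
    rw [← pow_add]
    congr 1
    omega
  set x := (1 - p) ^ (t - 1) with hx
  have key : ((1 - r) * ((1-p) * ((x - 1) / ((1-p) - 1)))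
        + (1 - p - p * r) * x
        + (1 - 2 * p) * r * ((x - 1) / ((1-p) - 1)) + 1 - r) * p
      = (1 - (1-p)^(t+1)) - r * (2 * p - p * (1-p)^t) := by
    have hdiv : (x - 1) / ((1-p) - 1) = (1 - x) / p := by
      rw [show (1-p) - 1 = -p by ring, div_neg, ← neg_div]
      ring_nf
    rw [hdiv, e1, e2]
    field_simp
    ring
  constructor
  · intro h
    nlinarith [key]
  · intro h
    nlinarith [key]
end

section
/- For p ∈ (0,1) and integer T ≥ 2, define A(T-1) = (1-r)·∑_{i=1}^{T-2}(1-p)^i + (1-p-p·r)·(1-p)^{T-2} + (1-2p)·r·∑_{i=1}^{T-2}(1-p)^{i-1}. Then 1 + A(T-1) = 1 + (1-p-p·r)·∑_{i=1}^{T-1}(1-p)^{i-1}, and consequently 1 + A(T-1) ≥ 0 if and only if r ≤ (1-(1-p)^T)/(p·(1-(1-p)^{T-1})). -/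
/-!
With `q = 1 - p` and `S m = ∑_{i<m} q^i`, the coefficients of `S (T-2)` in `A(T-1)` combine to
`(1 - r) q + (1 - 2p) r = 1 - p - p r`, and `S (T-2) + q^(T-2) = S (T-1)`; this gives the closed
form. For the sign, `p S m = 1 - q^m` turns `p (1 + A(T-1))` into
`1 - q^T - r p (1 - q^(T-1))`, whose second factor `p (1 - q^(T-1))` is positive.
-/

open Finset

lemma sum_Icc_one_eq_sum_range_succ {M : Type*} [AddCommMonoid M] (f : ℕ → M) (n : ℕ) :
    ∑ i ∈ Icc 1 n, f i = ∑ i ∈ range n, f (i + 1) := by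
  induction n with
  | zero => simp
  | succ n ih => rw [sum_Icc_succ_top (by omega), ih, sum_range_succ]

lemma sum_Icc_one_pow_sub_one {R : Type*} [Semiring R] (x : R) (n : ℕ) :
    ∑ i ∈ Icc 1 n, x ^ (i - 1) = ∑ i ∈ range n, x ^ i := by
  simp [sum_Icc_one_eq_sum_range_succ]

lemma sum_Icc_one_pow {R : Type*} [Semiring R] (x : R) (n : ℕ) :
    ∑ i ∈ Icc 1 n, x ^ i = x * ∑ i ∈ range n, x ^ i := by
  simp [sum_Icc_one_eq_sum_range_succ, mul_sum, pow_succ']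

lemma first_round_coeff_eq_mul_geom_sum {R : Type*} [CommRing R] (p r : R) (n : ℕ) :
    (1 - r) * ∑ i ∈ Icc 1 n, (1 - p) ^ i + (1 - p - p * r) * (1 - p) ^ n
        + (1 - 2 * p) * r * ∑ i ∈ Icc 1 n, (1 - p) ^ (i - 1)
      = (1 - p - p * r) * ∑ i ∈ range (n + 1), (1 - p) ^ i := by
  rw [sum_Icc_one_pow, sum_Icc_one_pow_sub_one, sum_range_succ]
  ring

lemma mul_one_add_mul_geom_sum (p r : ℝ) (n : ℕ) :
    p * (1 + (1 - p - p * r) * ∑ i ∈ range (n + 1), (1 - p) ^ i)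
      = 1 - (1 - p) ^ (n + 2) - r * (p * (1 - (1 - p) ^ (n + 1))) := by
  have hgeom := mul_neg_geom_sum (1 - p) (n + 1)
  rw [sub_sub_cancel] at hgeom
  linear_combination (1 - p - p * r) * hgeom

lemma one_add_mul_geom_sum_nonneg_iff {p : ℝ} (r : ℝ) (hp : 0 < p) (hp1 : p < 1) (n : ℕ) :
    0 ≤ 1 + (1 - p - p * r) * ∑ i ∈ range (n + 1), (1 - p) ^ i
      ↔ r ≤ (1 - (1 - p) ^ (n + 2)) / (p * (1 - (1 - p) ^ (n + 1))) := by
  have hpow : (1 - p) ^ (n + 1) < 1 := pow_lt_one₀ (by linarith) (by linarith) (by omega)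
  rw [← mul_nonneg_iff_of_pos_left hp, mul_one_add_mul_geom_sum, sub_nonneg,
    le_div_iff₀ (mul_pos hp (by linarith))]

theorem first_round_coeff (p r : ℝ) (hp : 0 < p) (hp1 : p < 1) (T : ℕ) (hT : 2 ≤ T) :
    (1 + ((1 - r) * (∑ i ∈ Finset.Icc 1 (T - 2), (1 - p) ^ i)
          + (1 - p - p * r) * (1 - p) ^ (T - 2)
          + (1 - 2 * p) * r * (∑ i ∈ Finset.Icc 1 (T - 2), (1 - p) ^ (i - 1)))
        = 1 + (1 - p - p * r) * (∑ i ∈ Finset.Icc 1 (T - 1), (1 - p) ^ (i - 1)))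
    ∧ (0 ≤ 1 + ((1 - r) * (∑ i ∈ Finset.Icc 1 (T - 2), (1 - p) ^ i)
          + (1 - p - p * r) * (1 - p) ^ (T - 2)
          + (1 - 2 * p) * r * (∑ i ∈ Finset.Icc 1 (T - 2), (1 - p) ^ (i - 1)))
        ↔ r ≤ (1 - (1 - p) ^ T) / (p * (1 - (1 - p) ^ (T - 1)))) := by
  obtain ⟨n, rfl⟩ : ∃ n, T = n + 2 := ⟨T - 2, by omega⟩
  rw [show n + 2 - 2 = n by omega, show n + 2 - 1 = n + 1 by omega,
    first_round_coeff_eq_mul_geom_sum, sum_Icc_one_pow_sub_one]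
  exact ⟨rfl, one_add_mul_geom_sum_nonneg_iff r hp hp1 n⟩
end
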